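/- Let α > 0 with α ≠ 1, β > 0, M > 0 and N ∈ ℝ, and define on ℝ × [0,∞) the function u(x,t) = M·( (√α)^{1 + 1/√α} / (α − 1) )·e^{((1−√α)/2)·t}·( (β/√α)·e^{−α·t} + (1 + √α)·x·( √α·x + √(α·x² + β·e^{−α·t}) ) ) / ( √α·x + √(α·x² + β·e^{−α·t}) )^{1 + 1/√α} + N. Then u satisfies the partial differential equation u_t(x,t)·u_xx(x,t) = (1/2)·u_x(x,t)² at every point, and its local risk tolerance is −u_x(x,t)/u_xx(x,t) = √(α·x² + β·e^{−α·t}) for all (x,t) ∈ ℝ × [0,∞). -/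

import Mathlib

/-!
Write `s = √α`, `R = √(α x² + β e^{-α t})` and `Z = s x + R > 0`. Since `∂ₓR = α x / R`, one gets
`∂ₓZ = s Z / R`, hence `∂ₓ Z^{-1/s} = -Z^{-1/s} / R`. After the identity
`(β/s) e^{-αt} + (1 + s) x Z = Z (R + α x) / s`, the utility reads
`u = K e^{(1-s)t/2} (R + α x) Z^{-1/s} + N` with `K = M s^{1/s} / (α - 1)`, and differentiating gives
`u_x = M s^{1/s} e^{(1-s)t/2} Z^{-1/s} > 0`, `u_xx = -u_x / R` and, using `R² - α x² = β e^{-αt}`,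
`u_t = -R u_x / 2`. Both claims are immediate from these three formulas.
-/

/-- Partial derivative in the first (wealth) argument. -/
noncomputable def pderivX (u : ℝ → ℝ → ℝ) (x t : ℝ) : ℝ := deriv (fun x' => u x' t) x

/-- Partial derivative in the second (time) argument. -/
noncomputable def pderivT (u : ℝ → ℝ → ℝ) (x t : ℝ) : ℝ := deriv (fun t' => u x t') t

/-- The forward utility corresponding (for `α ≠ 1`) to the asymptotically linear
local risk tolerance `r(x,t) = √(α·x² + β·e^{-α·t})`.  The powers with real exponent
`1 + 1/√α` are real (rpow) powers of positive bases. -/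
noncomputable def forwardUtilityAlphaNeOne (α β M N x t : ℝ) : ℝ :=
  M * (Real.sqrt α ^ ((1 : ℝ) + 1 / Real.sqrt α) / (α - 1))
      * Real.exp ((1 - Real.sqrt α) / 2 * t)
      * ((β / Real.sqrt α) * Real.exp (-α * t)
          + (1 + Real.sqrt α) * x
            * (Real.sqrt α * x + Real.sqrt (α * x^2 + β * Real.exp (-α * t))))
      / ((Real.sqrt α * x + Real.sqrt (α * x^2 + β * Real.exp (-α * t)))
          ^ ((1 : ℝ) + 1 / Real.sqrt α))
    + N

open Real

namespace ForwardUtility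

variable {α β x t : ℝ}

noncomputable def riskTolerance (α β x t : ℝ) : ℝ := √(α * x ^ 2 + β * exp (-α * t))

noncomputable def marginalUtility (α β M x t : ℝ) : ℝ :=
  M * √α ^ (1 / √α) * exp ((1 - √α) / 2 * t) * (√α * x + riskTolerance α β x t) ^ (-(1 / √α))

lemma riskTolerance_radicand_pos (hα : 0 ≤ α) (hβ : 0 < β) :
    0 < α * x ^ 2 + β * exp (-α * t) := by
  positivity

lemma riskTolerance_pos (hα : 0 ≤ α) (hβ : 0 < β) : 0 < riskTolerance α β x t :=
  sqrt_pos.2 (riskTolerance_radicand_pos hα hβ)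

lemma mul_exp_eq_riskTolerance_sq_sub (hα : 0 ≤ α) (hβ : 0 < β) :
    β * exp (-α * t) = riskTolerance α β x t ^ 2 - α * x ^ 2 := by
  rw [riskTolerance, sq_sqrt (riskTolerance_radicand_pos hα hβ).le]
  ring

lemma sqrt_mul_add_riskTolerance_pos (hα : 0 ≤ α) (hβ : 0 < β) :
    0 < √α * x + riskTolerance α β x t := by
  have hR := riskTolerance_pos (x := x) (t := t) hα hβ
  have hR2 := mul_exp_eq_riskTolerance_sq_sub (x := x) (t := t) hα hβ
  have hs2 : √α ^ 2 = α := sq_sqrt hα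
  nlinarith [exp_pos (-α * t), sq_nonneg (√α * x + riskTolerance α β x t)]

lemma hasDerivAt_riskTolerance_x (hα : 0 ≤ α) (hβ : 0 < β) :
    HasDerivAt (fun x ↦ riskTolerance α β x t) (α * x / riskTolerance α β x t) x := by
  have h := (((hasDerivAt_pow 2 x).const_mul α).add_const (β * exp (-α * t))).sqrt
    (riskTolerance_radicand_pos hα hβ).ne'
  refine h.congr_deriv ?_
  have hR := (riskTolerance_pos (x := x) (t := t) hα hβ).ne'
  rw [riskTolerance] at hR ⊢
  field_simp
  ring

lemma hasDerivAt_riskTolerance_t (hα : 0 ≤ α) (hβ : 0 < β) :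
    HasDerivAt (fun t ↦ riskTolerance α β x t)
      (-(α * β * exp (-α * t)) / (2 * riskTolerance α β x t)) t := by
  have h := ((((hasDerivAt_id t).const_mul (-α)).exp).const_mul β).const_add (α * x ^ 2) |>.sqrt
    (riskTolerance_radicand_pos hα hβ).ne'
  refine h.congr_deriv ?_
  simp only [riskTolerance, id]
  ring

lemma hasDerivAt_sqrt_mul_add_riskTolerance_rpow_x (hα : 0 < α) (hβ : 0 < β) :
    HasDerivAt (fun x ↦ (√α * x + riskTolerance α β x t) ^ (-(1 / √α)))
      (-(√α * x + riskTolerance α β x t) ^ (-(1 / √α)) / riskTolerance α β x t) x := by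
  have hZ := sqrt_mul_add_riskTolerance_pos (x := x) (t := t) hα.le hβ
  have hR := (riskTolerance_pos (x := x) (t := t) hα.le hβ).ne'
  have h := (((hasDerivAt_id' x).const_mul √α).add (hasDerivAt_riskTolerance_x hα.le hβ)).rpow_const
    (p := -(1 / √α)) (Or.inl hZ.ne')
  refine h.congr_deriv ?_
  have hs : √α ≠ 0 := (sqrt_pos.2 hα).ne'
  have hs2 : √α * √α = α := mul_self_sqrt hα.le
  simp only [Pi.add_apply, mul_one]
  rw [rpow_sub hZ, rpow_one]
  -- once `√α` is abstracted to `s`, writing `α = s * s` leaves a rational identity in `s`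
  set s := √α
  set R := riskTolerance α β x t
  rw [← hs2]
  field_simp
  ring

lemma hasDerivAt_sqrt_mul_add_riskTolerance_rpow_t (hα : 0 < α) (hβ : 0 < β) :
    HasDerivAt (fun t ↦ (√α * x + riskTolerance α β x t) ^ (-(1 / √α)))
      (√α * (riskTolerance α β x t - √α * x) / (2 * riskTolerance α β x t)
        * (√α * x + riskTolerance α β x t) ^ (-(1 / √α))) t := by
  have hZ := sqrt_mul_add_riskTolerance_pos (x := x) (t := t) hα.le hβ
  have h := ((hasDerivAt_riskTolerance_t hα.le hβ).const_add (√α * x)).rpow_const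
    (p := -(1 / √α)) (Or.inl hZ.ne')
  refine h.congr_deriv ?_
  have hs2 : √α * √α = α := mul_self_sqrt hα.le
  rw [rpow_sub hZ, rpow_one, mul_assoc α, mul_exp_eq_riskTolerance_sq_sub hα.le hβ]
  set s := √α
  set R := riskTolerance α β x t
  rw [← hs2]
  field_simp
  ring

lemma forwardUtilityAlphaNeOne_eq (hα : 0 < α) (hβ : 0 < β) (M N : ℝ) :
    forwardUtilityAlphaNeOne α β M N = fun x t ↦
      M * √α ^ (1 / √α) / (α - 1) * exp ((1 - √α) / 2 * t)
        * ((riskTolerance α β x t + α * x) * (√α * x + riskTolerance α β x t) ^ (-(1 / √α)))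
        + N := by
  ext x t
  have hZ := sqrt_mul_add_riskTolerance_pos (x := x) (t := t) hα.le hβ
  have hs : 0 < √α := sqrt_pos.2 hα
  have hs2 : √α * √α = α := mul_self_sqrt hα.le
  rw [forwardUtilityAlphaNeOne, ← riskTolerance, rpow_add hZ, rpow_add hs, rpow_one, rpow_one,
    rpow_neg hZ.le]
  have hkey : β / √α * exp (-α * t) + (1 + √α) * x * (√α * x + riskTolerance α β x t)
      = (√α * x + riskTolerance α β x t) * (riskTolerance α β x t + α * x) / √α := by
    rw [div_mul_eq_mul_div, mul_exp_eq_riskTolerance_sq_sub (x := x) hα.le hβ]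
    field_simp
    linear_combination (x ^ 2 + √α * x ^ 2 + x * riskTolerance α β x t) * hs2
  rw [hkey]
  field_simp

lemma marginalUtility_pos (hα : 0 < α) (hβ : 0 < β) {M : ℝ} (hM : 0 < M) :
    0 < marginalUtility α β M x t := by
  have hs := rpow_pos_of_pos (sqrt_pos.2 hα) (1 / √α)
  have hZ := rpow_pos_of_pos (sqrt_mul_add_riskTolerance_pos (x := x) (t := t) hα.le hβ) (-(1 / √α))
  unfold marginalUtility
  positivity

lemma hasDerivAt_forwardUtilityAlphaNeOne_x (hα : 0 < α) (hα1 : α ≠ 1) (hβ : 0 < β) (M N : ℝ) :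
    HasDerivAt (fun x ↦ forwardUtilityAlphaNeOne α β M N x t) (marginalUtility α β M x t) x := by
  rw [forwardUtilityAlphaNeOne_eq hα hβ]
  have h := ((((hasDerivAt_riskTolerance_x (t := t) hα.le hβ).add
    ((hasDerivAt_id' x).const_mul α)).mul (hasDerivAt_sqrt_mul_add_riskTolerance_rpow_x (t := t) hα hβ)).const_mul
      (M * √α ^ (1 / √α) / (α - 1) * exp ((1 - √α) / 2 * t))).add_const N
  refine h.congr_deriv ?_
  have hR := (riskTolerance_pos (x := x) (t := t) hα.le hβ).ne'
  have hα1' : α - 1 ≠ 0 := sub_ne_zero.2 hα1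
  simp only [Pi.add_apply]
  unfold marginalUtility
  field_simp
  ring

lemma hasDerivAt_marginalUtility_x (hα : 0 < α) (hβ : 0 < β) (M : ℝ) :
    HasDerivAt (fun x ↦ marginalUtility α β M x t)
      (-marginalUtility α β M x t / riskTolerance α β x t) x := by
  refine ((hasDerivAt_sqrt_mul_add_riskTolerance_rpow_x (t := t) hα hβ).const_mul
    (M * √α ^ (1 / √α) * exp ((1 - √α) / 2 * t))).congr_deriv ?_
  unfold marginalUtility
  ring

lemma hasDerivAt_forwardUtilityAlphaNeOne_t (hα : 0 < α) (hα1 : α ≠ 1) (hβ : 0 < β) (M N : ℝ) :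
    HasDerivAt (fun t ↦ forwardUtilityAlphaNeOne α β M N x t)
      (-(marginalUtility α β M x t * riskTolerance α β x t) / 2) t := by
  rw [forwardUtilityAlphaNeOne_eq hα hβ]
  have h := (((((hasDerivAt_id' t).const_mul ((1 - √α) / 2)).exp).const_mul
    (M * √α ^ (1 / √α) / (α - 1))).mul
      (((hasDerivAt_riskTolerance_t (x := x) hα.le hβ).add_const (α * x)).mul
        (hasDerivAt_sqrt_mul_add_riskTolerance_rpow_t (x := x) hα hβ))).add_const N
  refine h.congr_deriv ?_
  have hR := (riskTolerance_pos (x := x) (t := t) hα.le hβ).ne'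
  have hα1' : α - 1 ≠ 0 := sub_ne_zero.2 hα1
  have hs2 : √α ^ 2 = α := sq_sqrt hα.le
  simp only [Pi.mul_apply]
  rw [mul_assoc α, mul_exp_eq_riskTolerance_sq_sub hα.le hβ]
  unfold marginalUtility
  set s := √α
  set R := riskTolerance α β x t
  rw [← hs2] at hα1' ⊢
  field_simp
  ring

lemma pderivX_forwardUtilityAlphaNeOne (hα : 0 < α) (hα1 : α ≠ 1) (hβ : 0 < β) (M N : ℝ) :
    pderivX (forwardUtilityAlphaNeOne α β M N) x t = marginalUtility α β M x t :=
  (hasDerivAt_forwardUtilityAlphaNeOne_x hα hα1 hβ M N).deriv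

lemma pderivX_pderivX_forwardUtilityAlphaNeOne (hα : 0 < α) (hα1 : α ≠ 1) (hβ : 0 < β)
    (M N : ℝ) :
    pderivX (pderivX (forwardUtilityAlphaNeOne α β M N)) x t
      = -marginalUtility α β M x t / riskTolerance α β x t := by
  simp only [pderivX, (hasDerivAt_forwardUtilityAlphaNeOne_x hα hα1 hβ M N).deriv]
  exact (hasDerivAt_marginalUtility_x hα hβ M).deriv

lemma pderivT_forwardUtilityAlphaNeOne (hα : 0 < α) (hα1 : α ≠ 1) (hβ : 0 < β) (M N : ℝ) :
    pderivT (forwardUtilityAlphaNeOne α β M N) x t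
      = -(marginalUtility α β M x t * riskTolerance α β x t) / 2 :=
  (hasDerivAt_forwardUtilityAlphaNeOne_t hα hα1 hβ M N).deriv

end ForwardUtility

open ForwardUtility

/-- **Forward utility for `α ≠ 1`.** For `α > 0`, `α ≠ 1`, `β > 0`, `M > 0`, `N ∈ ℝ`,
the function
`u(x,t) = M·((√α)^{1+1/√α}/(α−1))·e^{((1−√α)/2)·t}·((β/√α)·e^{−α·t} + (1+√α)·x·(√α·x + √(α·x²+β·e^{−α·t}))) / (√α·x + √(α·x²+β·e^{−α·t}))^{1+1/√α} + N`
satisfies `u_t · u_xx = (1/2) · u_x²` on `ℝ × [0,∞)`, and its local risk tolerance is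
`-u_x/u_xx = √(α·x² + β·e^{−α·t})`. -/
theorem forwardUtilityAlphaNeOne_forward (α β M N : ℝ)
    (hα : 0 < α) (hα1 : α ≠ 1) (hβ : 0 < β) (hM : 0 < M) :
    ∀ x t : ℝ, 0 ≤ t →
      (pderivT (forwardUtilityAlphaNeOne α β M N) x t
          * pderivX (pderivX (forwardUtilityAlphaNeOne α β M N)) x t
        = (1/2) * (pderivX (forwardUtilityAlphaNeOne α β M N) x t)^2)
      ∧ (-(pderivX (forwardUtilityAlphaNeOne α β M N) x t)
            / pderivX (pderivX (forwardUtilityAlphaNeOne α β M N)) x t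
          = Real.sqrt (α * x^2 + β * Real.exp (-α * t))) := by
  intro x t _
  have hR := (riskTolerance_pos (x := x) (t := t) hα.le hβ).ne'
  have hu := (marginalUtility_pos (x := x) (t := t) hα hβ hM).ne'
  rw [pderivT_forwardUtilityAlphaNeOne hα hα1 hβ, pderivX_forwardUtilityAlphaNeOne hα hα1 hβ,
    pderivX_pderivX_forwardUtilityAlphaNeOne hα hα1 hβ, ← riskTolerance]
  exact ⟨by field_simp, by field_simp⟩
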